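/- arXiv:2601.19589 — 4 statements merged into one kernel-verified Lean document; each statement's English description precedes it below -/
import Mathlib

section
/- Let M be a compact topological space, μ a finite nonatomic Borel measure on M with full support, p : M → ℝ continuous with p > 0, and K : M × M → ℝ a continuous strictly positive kernel with K(x,x) = 1. Define for f ∈ C(M) the operator (L f)(x) = ∫ K(x,y)·(f(x) − f(y))·p(y) dμ(y). If p₁, p₂ are two strictly positive continuous densities whose associated operators L₁, L₂ coincide on C(M), then p₁ = p₂. -/
/-!
The operator is linear in the density, so `q = p₁ - p₂` satisfies `L_q f = 0` for all `f`, and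
for `f` vanishing at `x` one has `L_q f x = -∫ K(x, y) f(y) q(y) dμ(y)`. If `q` had no zero,
`f = g / q` with `g ≥ 0` an Urysohn function vanishing at `x` but not at some other point
(there is one, as `μ` has no atoms but charges `M`) would give `∫ K(x, ·) g = 0`, impossible
for a measure of full support. So `q(x₀) = 0` for some `x₀`, and `f = q` at `x₀` gives
`∫ K(x₀, ·) q² = 0`, hence `q = 0`.
-/

open MeasureTheory

noncomputable def graphLaplacian {M : Type*} [MeasurableSpace M] (μ : Measure M) (K : M × M → ℝ)
    (p f : M → ℝ) (x : M) : ℝ :=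
  ∫ y, K (x, y) * (f x - f y) * p y ∂μ

lemma graphLaplacian_of_eq_zero {M : Type*} [MeasurableSpace M] {μ : Measure M}
    {K : M × M → ℝ} {p f : M → ℝ} {x : M} (hfx : f x = 0) :
    graphLaplacian μ K p f x = -∫ y, K (x, y) * (f y * p y) ∂μ := by
  rw [graphLaplacian, ← integral_neg]
  congr 1 with y
  rw [hfx]
  ring

lemma nontrivial_of_isOpenPosMeasure {M : Type*} [TopologicalSpace M] [MeasurableSpace M]
    [Nonempty M] (μ : Measure M) [μ.IsOpenPosMeasure] [NullSingletonClass μ] : Nontrivial M := by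
  by_contra h
  rw [not_nontrivial_iff_subsingleton] at h
  exact (isOpen_univ.measure_pos μ Set.univ_nonempty).ne'
    (Set.subsingleton_univ.measure_zero μ)

section

variable {M : Type*} [TopologicalSpace M] [CompactSpace M] [MeasurableSpace M] [BorelSpace M]
  {μ : Measure M} [IsFiniteMeasure μ] {K : M × M → ℝ}

lemma graphLaplacian_sub (hK : Continuous K) {p₁ p₂ : M → ℝ}
    (hp₁ : Continuous p₁) (hp₂ : Continuous p₂) (f : C(M, ℝ)) (x : M) :
    graphLaplacian μ K (p₁ - p₂) f x =
      graphLaplacian μ K p₁ f x - graphLaplacian μ K p₂ f x := by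
  have integrable {p : M → ℝ} (hp : Continuous p) :
      Integrable (fun y ↦ K (x, y) * (f x - f y) * p y) μ :=
    Continuous.integrable_of_hasCompactSupport (by fun_prop) (.of_compactSpace _)
  rw [graphLaplacian, graphLaplacian, graphLaplacian,
    ← integral_sub (integrable hp₁) (integrable hp₂)]
  simp only [Pi.sub_apply, mul_sub]

lemma integral_kernel_mul_pos [μ.IsOpenPosMeasure] (hK : Continuous K)
    (hKpos : ∀ x y, 0 < K (x, y)) {g : M → ℝ} (hg : Continuous g) (hg_nonneg : 0 ≤ g) {y₀ : M}
    (hy₀ : g y₀ ≠ 0) (x : M) : 0 < ∫ y, K (x, y) * g y ∂μ :=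
  Continuous.integral_pos_of_hasCompactSupport_nonneg_nonzero (by fun_prop) (.of_compactSpace _)
    (fun y ↦ mul_nonneg (hKpos x y).le (hg_nonneg y)) (mul_ne_zero (hKpos x y₀).ne' hy₀)

variable [μ.IsOpenPosMeasure] {q : M → ℝ}

lemma exists_eq_zero_of_graphLaplacian_eq_zero [T2Space M] [Nontrivial M]
    (hK : Continuous K) (hKpos : ∀ x y, 0 < K (x, y)) (hq : Continuous q)
    (hL : ∀ (f : C(M, ℝ)) x, graphLaplacian μ K q f x = 0) : ∃ x, q x = 0 := by
  by_contra! hq_ne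
  obtain ⟨x, y₀, hne⟩ := exists_pair_ne M
  obtain ⟨g, hgx, hgy₀, hg01⟩ := exists_continuous_zero_one_of_isClosed isClosed_singleton
    isClosed_singleton (Set.disjoint_singleton.mpr hne)
  let f : C(M, ℝ) := ⟨fun y ↦ g y / q y, g.continuous.div hq hq_ne⟩
  have hLf : graphLaplacian μ K q f x = -∫ y, K (x, y) * g y ∂μ := by
    rw [graphLaplacian_of_eq_zero (by simp [f, hgx rfl])]
    simp [f, div_mul_cancel₀ _ (hq_ne _)]
  have hpos := integral_kernel_mul_pos (μ := μ) hK hKpos g.continuous (fun y ↦ (hg01 y).1)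
    (y₀ := y₀) (by simp [hgy₀ rfl]) x
  linarith [hL f x]

lemma eq_zero_of_graphLaplacian_eq_zero [T2Space M] [Nontrivial M]
    (hK : Continuous K) (hKpos : ∀ x y, 0 < K (x, y)) (hq : Continuous q)
    (hL : ∀ (f : C(M, ℝ)) x, graphLaplacian μ K q f x = 0) : q = 0 := by
  obtain ⟨x₀, hx₀⟩ := exists_eq_zero_of_graphLaplacian_eq_zero hK hKpos hq hL
  funext x
  by_contra hqx
  have hpos := integral_kernel_mul_pos (μ := μ) hK hKpos (g := fun y ↦ q y * q y)
    (by fun_prop) (fun y ↦ mul_self_nonneg (q y)) (mul_self_ne_zero.mpr hqx) x₀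
  have hLq : graphLaplacian μ K q q x₀ = 0 := hL ⟨q, hq⟩ x₀
  rw [graphLaplacian_of_eq_zero hx₀] at hLq
  linarith

end

theorem stmt_6_general {M : Type*} [TopologicalSpace M] [CompactSpace M] [T2Space M]
    [MeasurableSpace M] [BorelSpace M]
    (μ : Measure M) [IsFiniteMeasure μ] [NullSingletonClass μ] [μ.IsOpenPosMeasure]
    (K : M × M → ℝ) (hK : Continuous K) (hKpos : ∀ x y, 0 < K (x, y))
    (p₁ p₂ : M → ℝ) (hp₁ : Continuous p₁) (hp₂ : Continuous p₂)
    (h : ∀ f : C(M, ℝ), ∀ x : M,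
      ∫ y, K (x, y) * (f x - f y) * p₁ y ∂μ =
      ∫ y, K (x, y) * (f x - f y) * p₂ y ∂μ) :
    ∀ x, p₁ x = p₂ x := by
  intro x
  have : Nonempty M := ⟨x⟩
  have := nontrivial_of_isOpenPosMeasure μ
  have hq : p₁ - p₂ = 0 := eq_zero_of_graphLaplacian_eq_zero (μ := μ) hK hKpos (hp₁.sub hp₂)
    fun f z ↦ by
      rw [graphLaplacian_sub hK hp₁ hp₂, graphLaplacian, graphLaplacian, h f z, sub_self]
  exact sub_eq_zero.mp (congrFun hq x)

/-- Density identifiability for the unnormalized continuous graph Laplace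
operator with fixed continuous strictly positive kernel `K` (with `K(x,x)=1`) and fixed
finite nonatomic fully supported measure `μ`: equality of the operators associated to two
strictly positive continuous densities forces the densities to coincide. -/
theorem stmt_6 {M : Type*} [TopologicalSpace M] [CompactSpace M] [T2Space M]
    [MeasurableSpace M] [BorelSpace M]
    (μ : Measure M) [IsFiniteMeasure μ] [NullSingletonClass μ] [μ.IsOpenPosMeasure]
    (K : M × M → ℝ) (hK : Continuous K) (hKpos : ∀ x y, 0 < K (x, y))
    (hKdiag : ∀ x, K (x, x) = 1)
    (p₁ p₂ : M → ℝ) (hp₁ : Continuous p₁) (hp₂ : Continuous p₂)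
    (hp₁pos : ∀ x, 0 < p₁ x) (hp₂pos : ∀ x, 0 < p₂ x)
    (h : ∀ f : C(M, ℝ), ∀ x : M,
      ∫ y, K (x, y) * (f x - f y) * p₁ y ∂μ =
      ∫ y, K (x, y) * (f x - f y) * p₂ y ∂μ) :
    ∀ x, p₁ x = p₂ x :=
  stmt_6_general μ K hK hKpos p₁ p₂ hp₁ hp₂ h
end

section
/- Let M be a compact metric space, and for i = 1, 2 let m_i be finite nonatomic Borel measures on M and K_i : M × M → ℝ continuous kernels. Define (L_i f)(x) = ∫ K_i(x,y)·(f(x) − f(y)) dm_i(y) for f ∈ C(M). If L₁ = L₂ as operators on C(M), then for every x ∈ M the measures K₁(x,·)·m₁ and K₂(x,·)·m₂ are equal. -/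
/-!
Writing `Lᵢ f (x) = f x · ∫ Kᵢ(x,·) dmᵢ - ∫ Kᵢ(x,·) f dmᵢ`, the identity `L₁ = L₂` says that the
signed measure `K₁(x,·)·m₁ - K₂(x,·)·m₂` integrates every continuous `f` to `a · f x`, where
`a = ∫ K₁(x,·) dm₁ - ∫ K₂(x,·) dm₂`. Finite Borel measures on a metric space are determined by
their integrals of bounded continuous functions, so this signed measure is `a • δₓ`. Evaluating
at `{x}`, where both weighted measures vanish because `mᵢ` has no atoms, gives `a = 0`.
-/

open MeasureTheory BoundedContinuousFunction

namespace MeasureTheory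

theorem integral_mul_const_sub {X : Type*} [MeasurableSpace X] {m : Measure X} {k f : X → ℝ}
    (hk : Integrable k m) (hkf : Integrable (fun y => k y * f y) m) (c : ℝ) :
    ∫ y, k y * (c - f y) ∂m = c * ∫ y, k y ∂m - ∫ y, k y * f y ∂m := by
  simp only [mul_sub]
  rw [integral_sub (hk.mul_const c) hkf, integral_mul_const, mul_comm]

theorem Measure.withDensityᵥ_singleton {X : Type*} [MeasurableSpace X]
    [MeasurableSingletonClass X] {m : Measure X} [NullSingletonClass m] (k : X → ℝ) (x : X) :
    m.withDensityᵥ k {x} = 0 := by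
  by_cases hk : Integrable k m
  · rw [withDensityᵥ_apply hk (measurableSet_singleton x),
      Measure.restrict_eq_zero.mpr (measure_singleton x), integral_zero_measure]
  · rw [Measure.withDensityᵥ, dif_neg hk, zero_apply]

section Topological

variable {X : Type*} [MeasurableSpace X] [TopologicalSpace X] [OpensMeasurableSpace X]
  {m : Measure X} {k : X → ℝ}

theorem Integrable.mul_boundedContinuousFunction (hk : Integrable k m) (f : X →ᵇ ℝ) :
    Integrable (fun y => k y * f y) m := by
  simpa only [mul_comm] using hk.bdd_mul f.continuous.aestronglyMeasurable
    (Filter.Eventually.of_forall f.norm_coe_le_norm)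

theorem integral_withDensity_ofReal_sub_integral_withDensity_ofReal_neg (hk : Integrable k m)
    (f : X →ᵇ ℝ) :
    ∫ y, f y ∂(m.withDensity fun y => ENNReal.ofReal (k y))
      - ∫ y, f y ∂(m.withDensity fun y => ENNReal.ofReal (-k y)) = ∫ y, k y * f y ∂m := by
  rw [integral_withDensity_eq_integral_toReal_smul₀ hk.aemeasurable.ennreal_ofReal
      (Filter.Eventually.of_forall fun _ => ENNReal.ofReal_lt_top),
    integral_withDensity_eq_integral_toReal_smul₀ (f := fun y => ENNReal.ofReal (-k y))
      hk.neg.aemeasurable.ennreal_ofReal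
      (Filter.Eventually.of_forall fun _ => ENNReal.ofReal_lt_top)]
  simp only [ENNReal.toReal_ofReal', smul_eq_mul]
  rw [← integral_sub (hk.pos_part.mul_boundedContinuousFunction f)
    (hk.neg.pos_part.mul_boundedContinuousFunction (k := fun y => max (-k y) 0) f)]
  simp only [← sub_mul, max_zero_sub_max_neg_zero_eq_self]

end Topological

section Uniqueness

variable {X : Type*} [MeasurableSpace X] [TopologicalSpace X] [HasOuterApproxClosed X]
  [BorelSpace X]

theorem toSignedMeasure_sub_eq_smul_dirac_of_integral_sub_eq {μ ν : Measure X}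
    [IsFiniteMeasure μ] [IsFiniteMeasure ν] {a : ℝ} {x : X}
    (h : ∀ f : X →ᵇ ℝ, ∫ y, f y ∂μ - ∫ y, f y ∂ν = a * f x) :
    μ.toSignedMeasure - ν.toSignedMeasure = a • (Measure.dirac x).toSignedMeasure := by
  have hsum : μ + (-a).toNNReal • Measure.dirac x = ν + a.toNNReal • Measure.dirac x := by
    refine ext_of_forall_integral_eq_of_IsFiniteMeasure fun f => ?_
    rw [integral_add_measure (f.integrable μ) (f.integrable _),
      integral_add_measure (f.integrable ν) (f.integrable _),
      integral_smul_nnreal_measure, integral_smul_nnreal_measure,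
      integral_dirac' _ _ f.continuous.stronglyMeasurable,
      NNReal.smul_def, NNReal.smul_def, Real.coe_toNNReal', Real.coe_toNNReal', smul_eq_mul,
      smul_eq_mul]
    linear_combination h f - f x * max_zero_sub_max_neg_zero_eq_self a
  have hsigned := Measure.toSignedMeasure_congr hsum
  rw [Measure.toSignedMeasure_add, Measure.toSignedMeasure_add, Measure.toSignedMeasure_smul,
    Measure.toSignedMeasure_smul, NNReal.smul_def, NNReal.smul_def, Real.coe_toNNReal',
    Real.coe_toNNReal'] at hsigned
  rw [← max_zero_sub_max_neg_zero_eq_self a]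
  linear_combination (norm := module) hsigned

theorem withDensityᵥ_sub_withDensityᵥ_eq_smul_dirac {m₁ m₂ : Measure X} {k₁ k₂ : X → ℝ}
    (hk₁ : Integrable k₁ m₁) (hk₂ : Integrable k₂ m₂) {a : ℝ} {x : X}
    (h : ∀ f : X →ᵇ ℝ, ∫ y, k₁ y * f y ∂m₁ - ∫ y, k₂ y * f y ∂m₂ = a * f x) :
    m₁.withDensityᵥ k₁ - m₂.withDensityᵥ k₂ = a • (Measure.dirac x).toSignedMeasure := by
  have := isFiniteMeasure_withDensity_ofReal hk₁.2
  have := isFiniteMeasure_withDensity_ofReal hk₁.neg.2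
  have := isFiniteMeasure_withDensity_ofReal hk₂.2
  have := isFiniteMeasure_withDensity_ofReal hk₂.neg.2
  set P₁ := m₁.withDensity fun y => ENNReal.ofReal (k₁ y)
  set N₁ := m₁.withDensity fun y => ENNReal.ofReal (-k₁ y)
  set P₂ := m₂.withDensity fun y => ENNReal.ofReal (k₂ y)
  set N₂ := m₂.withDensity fun y => ENNReal.ofReal (-k₂ y)
  have hsplit : m₁.withDensityᵥ k₁ - m₂.withDensityᵥ k₂
      = (P₁ + N₂).toSignedMeasure - (P₂ + N₁).toSignedMeasure := by
    rw [withDensityᵥ_eq_withDensity_pos_part_sub_withDensity_neg_part hk₁,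
      withDensityᵥ_eq_withDensity_pos_part_sub_withDensity_neg_part hk₂,
      Measure.toSignedMeasure_add, Measure.toSignedMeasure_add]
    abel
  rw [hsplit]
  refine toSignedMeasure_sub_eq_smul_dirac_of_integral_sub_eq fun f => ?_
  rw [integral_add_measure (f.integrable P₁) (f.integrable N₂),
    integral_add_measure (f.integrable P₂) (f.integrable N₁), ← h f,
    ← integral_withDensity_ofReal_sub_integral_withDensity_ofReal_neg hk₁,
    ← integral_withDensity_ofReal_sub_integral_withDensity_ofReal_neg hk₂]
  ring

end Uniqueness

end MeasureTheory

/-- Step 1 of the identifiability proofs: if the two unnormalized graph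
Laplace operators built from continuous kernels `Kᵢ` and finite nonatomic measures `mᵢ`
coincide on `C(M)`, then for every `x` the weighted (signed) measures `K₁(x,·)·m₁` and
`K₂(x,·)·m₂` coincide. -/
theorem stmt_7 {M : Type*} [MetricSpace M] [CompactSpace M]
    [MeasurableSpace M] [BorelSpace M]
    (m₁ m₂ : Measure M) [IsFiniteMeasure m₁] [IsFiniteMeasure m₂]
    [NullSingletonClass m₁] [NullSingletonClass m₂]
    (K₁ K₂ : M × M → ℝ) (hK₁ : Continuous K₁) (hK₂ : Continuous K₂)
    (h : ∀ f : C(M, ℝ), ∀ x : M,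
      ∫ y, K₁ (x, y) * (f x - f y) ∂m₁ = ∫ y, K₂ (x, y) * (f x - f y) ∂m₂) :
    ∀ x : M,
      m₁.withDensityᵥ (fun y => K₁ (x, y)) = m₂.withDensityᵥ (fun y => K₂ (x, y)) := by
  intro x
  have hk₁ : Integrable (fun y => K₁ (x, y)) m₁ :=
    (hK₁.comp (.prodMk_right x)).integrable_of_hasCompactSupport (.of_compactSpace _)
  have hk₂ : Integrable (fun y => K₂ (x, y)) m₂ :=
    (hK₂.comp (.prodMk_right x)).integrable_of_hasCompactSupport (.of_compactSpace _)
  set a := ∫ y, K₁ (x, y) ∂m₁ - ∫ y, K₂ (x, y) ∂m₂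
  have hdiff := withDensityᵥ_sub_withDensityᵥ_eq_smul_dirac hk₁ hk₂ (a := a) (x := x) fun f => by
    have hf := h f.toContinuousMap x
    simp only [BoundedContinuousFunction.coe_toContinuousMap] at hf
    rw [integral_mul_const_sub hk₁ (hk₁.mul_boundedContinuousFunction f),
      integral_mul_const_sub hk₂ (hk₂.mul_boundedContinuousFunction f)] at hf
    linear_combination -hf
  have ha : a = 0 := by
    have hx := congrArg (fun s : SignedMeasure M => s {x}) hdiff
    simpa [Measure.withDensityᵥ_singleton, measureReal_def,
      Measure.toSignedMeasure_apply_measurable (measurableSet_singleton x)] using hx.symm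
  rwa [ha, zero_smul, sub_eq_zero] at hdiff
end

section
/- Let M be a compact metric space, μ₁, μ₂ finite Borel measures on M with full support that are mutually absolutely continuous with continuous positive Radon–Nikodym derivative w (dμ₂ = w dμ₁), p : M → ℝ continuous with p > 0, and K₁, K₂ : M × M → ℝ continuous strictly positive kernels with K_i(x,x) = 1. If ∫ K₁(x,y) f(y) p(y) dμ₁(y) = ∫ K₂(x,y) f(y) p(y) dμ₂(y) for all x ∈ M and all continuous f, then w ≡ 1, μ₁ = μ₂, and K₁ = K₂. -/
open MeasureTheory

/-- Step 2 of the intrinsic metric-identifiability theorem: equality of the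
integral operators built from continuous positive kernels (normalized on the diagonal),
a common strictly positive continuous density `p`, and mutually absolutely continuous
fully supported finite measures `μ₁, μ₂` with `dμ₂ = w dμ₁` (`w` continuous, positive)
forces `w ≡ 1`, `μ₁ = μ₂` and `K₁ = K₂`. -/
theorem stmt_11 {M : Type*} [MetricSpace M] [CompactSpace M]
    [MeasurableSpace M] [BorelSpace M]
    (μ₁ μ₂ : Measure M) [IsFiniteMeasure μ₁] [IsFiniteMeasure μ₂]
    [μ₁.IsOpenPosMeasure] [μ₂.IsOpenPosMeasure]
    (w : M → ℝ) (hw : Continuous w) (hwpos : ∀ y, 0 < w y)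
    (hac : μ₂ = μ₁.withDensity fun y => ENNReal.ofReal (w y))
    (p : M → ℝ) (hp : Continuous p) (hppos : ∀ y, 0 < p y)
    (K₁ K₂ : M × M → ℝ) (hK₁ : Continuous K₁) (hK₂ : Continuous K₂)
    (hK₁pos : ∀ x y, 0 < K₁ (x, y)) (hK₂pos : ∀ x y, 0 < K₂ (x, y))
    (hdiag₁ : ∀ x, K₁ (x, x) = 1) (hdiag₂ : ∀ x, K₂ (x, x) = 1)
    (h : ∀ x : M, ∀ f : C(M, ℝ),
      ∫ y, K₁ (x, y) * f y * p y ∂μ₁ = ∫ y, K₂ (x, y) * f y * p y ∂μ₂) :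
    (∀ y, w y = 1) ∧ μ₁ = μ₂ ∧ K₁ = K₂ := by
  have key : ∀ x y, K₁ (x, y) = K₂ (x, y) * w y := by
    intro x
    -- define the continuous test function g
    set g : M → ℝ := fun y => K₁ (x, y) - K₂ (x, y) * w y with hg
    have hKx₁ : Continuous fun y => K₁ (x, y) := hK₁.comp (Continuous.prodMk_right x)
    have hKx₂ : Continuous fun y => K₂ (x, y) := hK₂.comp (Continuous.prodMk_right x)
    have hgc : Continuous g := hKx₁.sub (hKx₂.mul hw)
    have hmeas : Measurable fun y => Real.toNNReal (w y) :=
      (hw.measurable).real_toNNReal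
    have hrw : ∀ F : M → ℝ, ∫ y, F y ∂μ₂ = ∫ y, w y * F y ∂μ₁ := by
      intro F
      rw [hac]
      have : (fun y => ENNReal.ofReal (w y)) = fun y => ((Real.toNNReal (w y) : NNReal) : ENNReal) := rfl
      rw [this, integral_withDensity_eq_integral_smul hmeas]
      congr 1
      funext y
      simp [NNReal.smul_def, Real.coe_toNNReal _ (hwpos y).le]
    have heq := h x ⟨g, hgc⟩
    simp only [ContinuousMap.coe_mk] at heq
    rw [hrw] at heq
    have hzero : ∫ y, (g y) ^ 2 * p y ∂μ₁ = 0 := by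
      have h1 : Continuous fun y => K₁ (x, y) * g y * p y := (hKx₁.mul hgc).mul hp
      have h2 : Continuous fun y => w y * (K₂ (x, y) * g y * p y) :=
        hw.mul ((hKx₂.mul hgc).mul hp)
      have hi1 : Integrable (fun y => K₁ (x, y) * g y * p y) μ₁ := h1.integrable_of_hasCompactSupport (HasCompactSupport.of_compactSpace _)
      have hi2 : Integrable (fun y => w y * (K₂ (x, y) * g y * p y)) μ₁ := h2.integrable_of_hasCompactSupport (HasCompactSupport.of_compactSpace _)
      have : ∫ y, (K₁ (x, y) * g y * p y - w y * (K₂ (x, y) * g y * p y)) ∂μ₁ = 0 := by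
        rw [integral_sub hi1 hi2, heq, sub_self]
      rw [← this]
      congr 1
      funext y
      simp only [hg]
      ring
    have hnn : ∀ y, 0 ≤ (g y) ^ 2 * p y := fun y =>
      mul_nonneg (sq_nonneg _) (hppos y).le
    have hgcont : Continuous fun y => (g y) ^ 2 * p y := (hgc.pow 2).mul hp
    have hint : Integrable (fun y => (g y) ^ 2 * p y) μ₁ := hgcont.integrable_of_hasCompactSupport (HasCompactSupport.of_compactSpace _)
    have hae : (fun y => (g y) ^ 2 * p y) =ᵐ[μ₁] 0 :=
      (integral_eq_zero_iff_of_nonneg hnn hint).mp hzero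
    have heq0 : (fun y => (g y) ^ 2 * p y) = 0 :=
      (Continuous.ae_eq_iff_eq μ₁ hgcont continuous_const).mp hae
    intro y
    have := congrFun heq0 y
    simp only [Pi.zero_apply] at this
    have hg0 : g y = 0 := by
      rcases mul_eq_zero.mp this with h' | h'
      · exact pow_eq_zero_iff (two_ne_zero) |>.mp h'
      · exact absurd h' (hppos y).ne'
    have := hg0
    simp only [hg] at this
    linarith
  have hw1 : ∀ y, w y = 1 := by
    intro y
    have := key y y
    rw [hdiag₁, hdiag₂, one_mul] at this
    exact this.symm
  have hK : K₁ = K₂ := by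
    funext z
    obtain ⟨x, y⟩ := z
    rw [key x y, hw1 y, mul_one]
  refine ⟨hw1, ?_, hK⟩
  rw [hac]
  have : (fun y => ENNReal.ofReal (w y)) = (1 : M → ENNReal) := by
    funext y; rw [hw1 y]; simp
  rw [this, withDensity_one]
end

section
/- Fix t > 0 and a map ι : M → ℝ^D on a compact metric space M, with K(x,y) = exp(−‖ι(x) − ι(y)‖²/t) continuous and strictly positive. For i = 1, 2 let m_i be finite nonatomic Borel measures on M with full support that are mutually absolutely continuous with continuous positive derivative. Define (L_i f)(x) = t^{−(d/2+1)} ∫ K(x,y)(f(x) − f(y)) dm_i(y). If L₁ = L₂ as operators on C(M), then m₁ = m₂. -/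
open MeasureTheory

/-!
Writing `dm₂ = w dm₁`, equality of the two operators says that
`∫ K(x,y) (f x - f y) (w y - 1) dm₁(y) = 0` for every continuous `f`. Testing it against
`f y = -K(x,y) (w y - 1) dist(x,y)` turns the integrand into the nonnegative continuous function
`K(x,y)² (w y - 1)² dist(x,y)`, which must therefore vanish almost everywhere. As `m₁` has no
atoms, `w = 1` almost everywhere, so `m₂ = m₁`.
-/

lemma integral_mul_sub_one_eq_zero_of_integral_eq_integral_withDensity {X : Type*}
    [MeasurableSpace X] {μ : Measure X} {w g : X → ℝ} (hw : Measurable w) (hw0 : ∀ y, 0 ≤ w y)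
    (hg : Integrable g μ) (hwg : Integrable (fun y => w y * g y) μ)
    (h : ∫ y, g y ∂μ = ∫ y, g y ∂μ.withDensity fun y => ENNReal.ofReal (w y)) :
    ∫ y, g y * (w y - 1) ∂μ = 0 := by
  rw [integral_withDensity_eq_integral_toReal_smul hw.ennreal_ofReal
    (.of_forall fun _ => ENNReal.ofReal_lt_top)] at h
  simp only [ENNReal.toReal_ofReal (hw0 _), smul_eq_mul] at h
  have hsplit : (fun y => g y * (w y - 1)) = fun y => w y * g y - g y := by
    funext y; ring
  rw [hsplit, integral_sub hwg hg, ← h, sub_self]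

lemma ae_eq_zero_of_forall_integral_mul_sub_mul_eq_zero {M : Type*} [MetricSpace M]
    [CompactSpace M] [MeasurableSpace M] [BorelSpace M] {μ : Measure M} [IsFiniteMeasure μ]
    [NullSingletonClass μ] {k v : M → ℝ} (hk : Continuous k) (hk0 : ∀ y, k y ≠ 0)
    (hv : Continuous v) (x : M) (h : ∀ f : C(M, ℝ), ∫ y, k y * (f x - f y) * v y ∂μ = 0) :
    v =ᵐ[μ] 0 := by
  set F : M → ℝ := fun y => (k y * v y) ^ 2 * dist x y
  have hF : Continuous F := by fun_prop
  have hF0 : 0 ≤ F := fun y => by positivity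
  have hFint : ∫ y, F y ∂μ = 0 := by
    have := h ⟨fun y => -(k y * v y * dist x y), by fun_prop⟩
    simp only [ContinuousMap.coe_mk, dist_self, mul_zero, neg_zero, zero_sub] at this
    rw [← this]
    congr 1; funext y; ring
  have hFae : F =ᵐ[μ] 0 := (integral_eq_zero_iff_of_nonneg hF0
    (hF.integrable_of_hasCompactSupport (.of_compactSpace F))).1 hFint
  filter_upwards [hFae, μ.ae_ne x] with y hFy hyx
  simpa [F, hk0 y, dist_ne_zero.2 hyx.symm] using hFy

theorem stmt_18_general {M : Type*} [MetricSpace M] [CompactSpace M]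
    [MeasurableSpace M] [BorelSpace M]
    {D : ℕ} (t : ℝ) (ht : 0 < t) (d : ℕ)
    (ι : M → EuclideanSpace ℝ (Fin D)) (hι : Continuous ι)
    (m₁ m₂ : Measure M) [IsFiniteMeasure m₁]
    [NullSingletonClass m₁]
    (w : M → ℝ) (hw : Continuous w) (hwpos : ∀ y, 0 < w y)
    (hac : m₂ = m₁.withDensity fun y => ENNReal.ofReal (w y))
    (h : ∀ f : C(M, ℝ), ∀ x : M,
      t ^ (-((d : ℝ) / 2 + 1)) *
          ∫ y, Real.exp (-‖ι x - ι y‖ ^ 2 / t) * (f x - f y) ∂m₁ =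
      t ^ (-((d : ℝ) / 2 + 1)) *
          ∫ y, Real.exp (-‖ι x - ι y‖ ^ 2 / t) * (f x - f y) ∂m₂) :
    m₁ = m₂ := by
  have integrable : ∀ g : M → ℝ, Continuous g → Integrable g m₁ := fun g hg =>
    hg.integrable_of_hasCompactSupport (.of_compactSpace g)
  have hK : ∀ x, Continuous fun y => Real.exp (-‖ι x - ι y‖ ^ 2 / t) := fun x => by fun_prop
  have hdiff : ∀ (f : C(M, ℝ)) x,
      ∫ y, Real.exp (-‖ι x - ι y‖ ^ 2 / t) * (f x - f y) * (w y - 1) ∂m₁ = 0 := by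
    intro f x
    have hg : Continuous fun y => Real.exp (-‖ι x - ι y‖ ^ 2 / t) * (f x - f y) := by fun_prop
    refine integral_mul_sub_one_eq_zero_of_integral_eq_integral_withDensity hw.measurable
      (fun y => (hwpos y).le) (integrable _ hg) (integrable _ (hw.mul hg)) ?_
    rw [← hac]
    exact mul_left_cancel₀ (Real.rpow_pos_of_pos ht _).ne' (h f x)
  have hw1 : (fun y => w y - 1) =ᵐ[m₁] 0 := by
    rcases isEmpty_or_nonempty M with hM | ⟨⟨x⟩⟩
    · exact .of_forall isEmptyElim
    · exact ae_eq_zero_of_forall_integral_mul_sub_mul_eq_zero (hK x) (fun y => (Real.exp_pos _).ne')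
        (hw.sub continuous_const) x (hdiff · x)
  conv_lhs => rw [← withDensity_one (μ := m₁)]
  rw [hac]
  refine withDensity_congr_ae (hw1.mono fun y hy => ?_)
  simp [sub_eq_zero.1 hy]

/-- Extrinsic identifiability of the sampling measure: with a fixed
embedding `ι : M → ℝ^D` (hence a fixed Gaussian kernel `K(x,y) = exp(−‖ι x − ι y‖²/t)`),
if the unnormalized graph Laplace operators built from two finite nonatomic fully
supported, mutually absolutely continuous measures `m₁, m₂` (with continuous positive
derivative `w`, `dm₂ = w dm₁`) coincide on `C(M)`, then `m₁ = m₂`. -/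
theorem stmt_18 {M : Type*} [MetricSpace M] [CompactSpace M]
    [MeasurableSpace M] [BorelSpace M]
    {D : ℕ} (t : ℝ) (ht : 0 < t) (d : ℕ)
    (ι : M → EuclideanSpace ℝ (Fin D)) (hι : Continuous ι)
    (m₁ m₂ : Measure M) [IsFiniteMeasure m₁] [IsFiniteMeasure m₂]
    [NullSingletonClass m₁] [NullSingletonClass m₂] [m₁.IsOpenPosMeasure] [m₂.IsOpenPosMeasure]
    (w : M → ℝ) (hw : Continuous w) (hwpos : ∀ y, 0 < w y)
    (hac : m₂ = m₁.withDensity fun y => ENNReal.ofReal (w y))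
    (h : ∀ f : C(M, ℝ), ∀ x : M,
      t ^ (-((d : ℝ) / 2 + 1)) *
          ∫ y, Real.exp (-‖ι x - ι y‖ ^ 2 / t) * (f x - f y) ∂m₁ =
      t ^ (-((d : ℝ) / 2 + 1)) *
          ∫ y, Real.exp (-‖ι x - ι y‖ ^ 2 / t) * (f x - f y) ∂m₂) :
    m₁ = m₂ :=
  stmt_18_general t ht d ι hι m₁ m₂ w hw hwpos hac h
end
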